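/- In any compository, composition is associative: for a triple $(A,B,C) \in \mathcal{C}(l) \times \mathcal{C}(m) \times \mathcal{C}(n)$ with $At_j = Bs_j$ and $Bt_k = Cs_k$, the pairs $(A, B \circ_k C)$ and $(A \circ_j B, C)$ are $j$- and $k$-composable respectively, and $A \circ_j (B \circ_k C) = (A \circ_j B) \circ_k C$. -/

import Mathlib

/-!
Iterating the face axioms for `∂_last` and `∂_0` gives `(A ∘_k B)s_r = A ∘_k Bs_p` and
`(A ∘_k B)t_r = At_q ∘_k B`; with the identity axioms these yield the source and target
conditions `(A ∘_k B)s_m = A`, `(A ∘_k B)t_n = B`, and with the back-and-forth axiom the two-step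
rule. Both `A ∘_j (B ∘_k C)` and `(A ∘_j B) ∘_k C` then equal `(A ∘_j B) ∘_m (B ∘_k C)`: split
the first along `s_m`, using `(B ∘_k C)s_m = B`, and the second along `t_m`, using
`(A ∘_j B)t_m = B`.
-/

open CategoryTheory Opposite

namespace Compo

/-- The object `[n]` of the simplex category. -/
abbrev sobj (n : ℕ) : SimplexCategory := SimplexCategory.mk n

/-- The "initial face" map `s_k : [k] → [n]`, `v ↦ v`. -/
def srcHom (k n : ℕ) (h : k ≤ n) : sobj k ⟶ sobj n :=
  SimplexCategory.mkHom
    ⟨fun v => ⟨v.1, by have := v.isLt; omega⟩, fun a b hab => Fin.mk_le_mk.mpr hab⟩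

/-- The "terminal face" map `t_k : [k] → [n]`, `v ↦ v + n - k`. -/
def tgtHom (k n : ℕ) (h : k ≤ n) : sobj k ⟶ sobj n :=
  SimplexCategory.mkHom
    ⟨fun v => ⟨v.1 + (n - k), by have := v.isLt; omega⟩, fun a b hab => by
      simp only [Fin.le_def] at hab ⊢; omega⟩

/-- A compository: a simplicial set equipped with compositions of `k`-composable
pairs, satisfying the identity axiom, the back-and-forth axiom, and compatibility
with degeneracy and face maps. The dimension `N` of the composite satisfies
`m + n = N + k`. -/
structure Compository where
  X : SSet.{0}
  comp : ∀ {m n k N : ℕ} (hm : k ≤ m) (hn : k ≤ n) (_ : m + n = N + k)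
    (A : X.obj (op (sobj m))) (B : X.obj (op (sobj n))),
    X.map (tgtHom k m hm).op A = X.map (srcHom k n hn).op B → X.obj (op (sobj N))
  /-- Identity axiom: `As_k ∘_k A = A`. -/
  id_left : ∀ {m k : ℕ} (hm : k ≤ m) (A : X.obj (op (sobj m))) h,
    comp (le_refl k) hm (by omega) (X.map (srcHom k m hm).op A) A h = A
  /-- Identity axiom: `A ∘_k At_k = A`. -/
  id_right : ∀ {m k : ℕ} (hm : k ≤ m) (A : X.obj (op (sobj m))) h,
    comp hm (le_refl k) (by omega) A (X.map (tgtHom k m hm).op A) h = A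
  /-- Back-and-forth axiom: `(A ∘_k B)s_{m+i} ∘_{k+i} B = A ∘_k B` for `i ≤ n - k`. -/
  back_forth_left : ∀ {m n k N : ℕ} (hm : k ≤ m) (hn : k ≤ n) (hN : m + n = N + k)
    (i : ℕ) (hi : i ≤ n - k)
    (A : X.obj (op (sobj m))) (B : X.obj (op (sobj n)))
    (hAB : X.map (tgtHom k m hm).op A = X.map (srcHom k n hn).op B)
    (h : X.map (tgtHom (k + i) (m + i) (by omega)).op
      (X.map (srcHom (m + i) N (by omega)).op (comp hm hn hN A B hAB))
      = X.map (srcHom (k + i) n (by omega)).op B),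
    comp (show k + i ≤ m + i by omega) (show k + i ≤ n by omega)
      (show (m + i) + n = N + (k + i) by omega)
      (X.map (srcHom (m + i) N (by omega)).op (comp hm hn hN A B hAB)) B h
    = comp hm hn hN A B hAB
  /-- Back-and-forth axiom: `A ∘_{k+j} (A ∘_k B)t_{n+j} = A ∘_k B` for `j ≤ m - k`. -/
  back_forth_right : ∀ {m n k N : ℕ} (hm : k ≤ m) (hn : k ≤ n) (hN : m + n = N + k)
    (j : ℕ) (hj : j ≤ m - k)
    (A : X.obj (op (sobj m))) (B : X.obj (op (sobj n)))
    (hAB : X.map (tgtHom k m hm).op A = X.map (srcHom k n hn).op B)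
    (h : X.map (tgtHom (k + j) m (by omega)).op A
      = X.map (srcHom (k + j) (n + j) (by omega)).op
        (X.map (tgtHom (n + j) N (by omega)).op (comp hm hn hN A B hAB))),
    comp (show k + j ≤ m by omega) (show k + j ≤ n + j by omega)
      (show m + (n + j) = N + (k + j) by omega)
      A (X.map (tgtHom (n + j) N (by omega)).op (comp hm hn hN A B hAB)) h
    = comp hm hn hN A B hAB
  /-- `(A ∘_k B)η_i = Aη_i ∘_k B` for `i ≤ m - k`. -/
  comp_eta_low : ∀ {m n k N : ℕ} (hm : k ≤ m) (hn : k ≤ n) (hN : m + n = N + k)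
    (i : ℕ) (hi : i ≤ m - k)
    (A : X.obj (op (sobj m))) (B : X.obj (op (sobj n)))
    (hAB : X.map (tgtHom k m hm).op A = X.map (srcHom k n hn).op B)
    (h : X.map (tgtHom k (m + 1) (by omega)).op
      (X.map (SimplexCategory.σ (⟨i, by omega⟩ : Fin (m + 1))).op A)
      = X.map (srcHom k n hn).op B),
    X.map (SimplexCategory.σ (⟨i, by omega⟩ : Fin (N + 1))).op (comp hm hn hN A B hAB)
    = comp (show k ≤ m + 1 by omega) hn (show (m + 1) + n = (N + 1) + k by omega)
        (X.map (SimplexCategory.σ (⟨i, by omega⟩ : Fin (m + 1))).op A) B h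
  /-- `(A ∘_k B)η_i = A ∘_k Bη_{i-m+k}` for `i ≥ m`. -/
  comp_eta_high : ∀ {m n k N : ℕ} (hm : k ≤ m) (hn : k ≤ n) (hN : m + n = N + k)
    (i : ℕ) (hi1 : m ≤ i) (hi2 : i ≤ N)
    (A : X.obj (op (sobj m))) (B : X.obj (op (sobj n)))
    (hAB : X.map (tgtHom k m hm).op A = X.map (srcHom k n hn).op B)
    (h : X.map (tgtHom k m hm).op A
      = X.map (srcHom k (n + 1) (by omega)).op
        (X.map (SimplexCategory.σ (⟨i - m + k, by omega⟩ : Fin (n + 1))).op B)),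
    X.map (SimplexCategory.σ (⟨i, by omega⟩ : Fin (N + 1))).op (comp hm hn hN A B hAB)
    = comp hm (show k ≤ n + 1 by omega) (show m + (n + 1) = (N + 1) + k by omega)
        A (X.map (SimplexCategory.σ (⟨i - m + k, by omega⟩ : Fin (n + 1))).op B) h
  /-- `(A ∘_k B)η_i = Aη_i ∘_{k+1} Bη_{i-m+k}` for `m - k ≤ i ≤ m`. -/
  comp_eta_mid : ∀ {m n k N : ℕ} (hm : k ≤ m) (hn : k ≤ n) (hN : m + n = N + k)
    (i : ℕ) (hi1 : m - k ≤ i) (hi2 : i ≤ m)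
    (A : X.obj (op (sobj m))) (B : X.obj (op (sobj n)))
    (hAB : X.map (tgtHom k m hm).op A = X.map (srcHom k n hn).op B)
    (h : X.map (tgtHom (k + 1) (m + 1) (by omega)).op
      (X.map (SimplexCategory.σ (⟨i, by omega⟩ : Fin (m + 1))).op A)
      = X.map (srcHom (k + 1) (n + 1) (by omega)).op
        (X.map (SimplexCategory.σ (⟨i - m + k, by omega⟩ : Fin (n + 1))).op B)),
    X.map (SimplexCategory.σ (⟨i, by omega⟩ : Fin (N + 1))).op (comp hm hn hN A B hAB)
    = comp (show k + 1 ≤ m + 1 by omega) (show k + 1 ≤ n + 1 by omega)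
        (show (m + 1) + (n + 1) = (N + 1) + (k + 1) by omega)
        (X.map (SimplexCategory.σ (⟨i, by omega⟩ : Fin (m + 1))).op A)
        (X.map (SimplexCategory.σ (⟨i - m + k, by omega⟩ : Fin (n + 1))).op B) h
  /-- `(A ∘_k B)∂_i = A∂_i ∘_k B` for `i < m - k` (here `A` is an `(m+1)`-simplex). -/
  comp_delta_low : ∀ {m n k N : ℕ} (hm : k ≤ m + 1) (hn : k ≤ n)
    (hN : (m + 1) + n = (N + 1) + k)
    (i : ℕ) (hi : i < m + 1 - k)
    (A : X.obj (op (sobj (m + 1)))) (B : X.obj (op (sobj n)))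
    (hAB : X.map (tgtHom k (m + 1) hm).op A = X.map (srcHom k n hn).op B)
    (h : X.map (tgtHom k m (by omega)).op
      (X.map (SimplexCategory.δ (⟨i, by omega⟩ : Fin (m + 2))).op A)
      = X.map (srcHom k n hn).op B),
    X.map (SimplexCategory.δ (⟨i, by omega⟩ : Fin (N + 2))).op (comp hm hn hN A B hAB)
    = comp (show k ≤ m by omega) hn (show m + n = N + k by omega)
        (X.map (SimplexCategory.δ (⟨i, by omega⟩ : Fin (m + 2))).op A) B h
  /-- `(A ∘_k B)∂_i = A ∘_k B∂_{i-m+k}` for `i > m` (here `B` is an `(n+1)`-simplex). -/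
  comp_delta_high : ∀ {m n k N : ℕ} (hm : k ≤ m) (hn : k ≤ n + 1)
    (hN : m + (n + 1) = (N + 1) + k)
    (i : ℕ) (hi1 : m < i) (hi2 : i ≤ N + 1)
    (A : X.obj (op (sobj m))) (B : X.obj (op (sobj (n + 1))))
    (hAB : X.map (tgtHom k m hm).op A = X.map (srcHom k (n + 1) hn).op B)
    (h : X.map (tgtHom k m hm).op A
      = X.map (srcHom k n (by omega)).op
        (X.map (SimplexCategory.δ (⟨i - m + k, by omega⟩ : Fin (n + 2))).op B)),
    X.map (SimplexCategory.δ (⟨i, by omega⟩ : Fin (N + 2))).op (comp hm hn hN A B hAB)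
    = comp hm (show k ≤ n by omega) (show m + n = N + k by omega)
        A (X.map (SimplexCategory.δ (⟨i - m + k, by omega⟩ : Fin (n + 2))).op B) h

end Compo

namespace Compo

section Faces

variable {a b c : ℕ}

lemma srcHom_comp_srcHom (h₁ : a ≤ b) (h₂ : b ≤ c) :
    srcHom a b h₁ ≫ srcHom b c h₂ = srcHom a c (h₁.trans h₂) :=
  SimplexCategory.Hom.ext _ _ (by ext; rfl)

lemma tgtHom_comp_tgtHom (h₁ : a ≤ b) (h₂ : b ≤ c) :
    tgtHom a b h₁ ≫ tgtHom b c h₂ = tgtHom a c (h₁.trans h₂) := by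
  refine SimplexCategory.Hom.ext _ _ (OrderHom.ext _ _ (funext fun v => Fin.ext ?_))
  change (v : ℕ) + (b - a) + (c - b) = v + (c - a)
  omega

lemma srcHom_self (h : a ≤ a) : srcHom a a h = 𝟙 (sobj a) :=
  SimplexCategory.Hom.ext _ _ (by ext; rfl)

lemma tgtHom_self (h : a ≤ a) : tgtHom a a h = 𝟙 (sobj a) := by
  refine SimplexCategory.Hom.ext _ _ (OrderHom.ext _ _ (funext fun v => Fin.ext ?_))
  change (v : ℕ) + (a - a) = v
  omega

lemma srcHom_comp_δ_last (h : a ≤ b) :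
    srcHom a b h ≫ SimplexCategory.δ (Fin.last (b + 1))
      = srcHom a (b + 1) (h.trans b.le_succ) := by
  refine SimplexCategory.Hom.ext _ _ (OrderHom.ext _ _ (funext fun v => Fin.ext ?_))
  change ((Fin.last (b + 1)).succAbove ⟨v, _⟩ : ℕ) = v
  rw [Fin.succAbove_last]
  rfl

lemma tgtHom_comp_δ_zero (h : a ≤ b) :
    tgtHom a b h ≫ SimplexCategory.δ 0 = tgtHom a (b + 1) (h.trans b.le_succ) := by
  refine SimplexCategory.Hom.ext _ _ (OrderHom.ext _ _ (funext fun v => Fin.ext ?_))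
  change ((0 : Fin (b + 2)).succAbove _ : ℕ) = v + (b + 1 - a)
  rw [Fin.succAbove_zero, Fin.val_succ]
  change (v : ℕ) + (b - a) + 1 = v + (b + 1 - a)
  omega

end Faces

section Simplices

variable (X : SSet.{0}) {a b c : ℕ}

lemma map_srcHom_map_srcHom (h₁ : a ≤ b) (h₂ : b ≤ c) (x : X.obj (op (sobj c))) :
    X.map (srcHom a b h₁).op (X.map (srcHom b c h₂).op x)
      = X.map (srcHom a c (h₁.trans h₂)).op x := by
  rw [← Functor.map_comp_apply, ← op_comp, srcHom_comp_srcHom]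

lemma map_tgtHom_map_tgtHom (h₁ : a ≤ b) (h₂ : b ≤ c) (x : X.obj (op (sobj c))) :
    X.map (tgtHom a b h₁).op (X.map (tgtHom b c h₂).op x)
      = X.map (tgtHom a c (h₁.trans h₂)).op x := by
  rw [← Functor.map_comp_apply, ← op_comp, tgtHom_comp_tgtHom]

lemma map_srcHom_self (h : a ≤ a) (x : X.obj (op (sobj a))) : X.map (srcHom a a h).op x = x := by
  rw [srcHom_self, op_id, Functor.map_id_apply]

lemma map_tgtHom_self (h : a ≤ a) (x : X.obj (op (sobj a))) : X.map (tgtHom a a h).op x = x := by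
  rw [tgtHom_self, op_id, Functor.map_id_apply]

lemma map_srcHom_map_δ_last (h : a ≤ b) (x : X.obj (op (sobj (b + 1)))) :
    X.map (srcHom a b h).op (X.map (SimplexCategory.δ (Fin.last (b + 1))).op x)
      = X.map (srcHom a (b + 1) (h.trans b.le_succ)).op x := by
  rw [← Functor.map_comp_apply, ← op_comp, srcHom_comp_δ_last]

lemma map_tgtHom_map_δ_zero (h : a ≤ b) (x : X.obj (op (sobj (b + 1)))) :
    X.map (tgtHom a b h).op (X.map (SimplexCategory.δ 0).op x)
      = X.map (tgtHom a (b + 1) (h.trans b.le_succ)).op x := by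
  rw [← Functor.map_comp_apply, ← op_comp, tgtHom_comp_δ_zero]

end Simplices

namespace Compository

variable (𝒞 : Compository) {m n k N : ℕ}

lemma comp_congr (hm : k ≤ m) (hn : k ≤ n) (hN : m + n = N + k)
    {A A' : 𝒞.X.obj (op (sobj m))} {B B' : 𝒞.X.obj (op (sobj n))}
    (hA : A = A') (hB : B = B')
    (h : 𝒞.X.map (tgtHom k m hm).op A = 𝒞.X.map (srcHom k n hn).op B)
    (h' : 𝒞.X.map (tgtHom k m hm).op A' = 𝒞.X.map (srcHom k n hn).op B') :
    𝒞.comp hm hn hN A B h = 𝒞.comp hm hn hN A' B' h' := by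
  subst hA hB
  rfl

lemma map_δ_last_comp (hm : k ≤ m) (hn : k ≤ n) (hN : m + (n + 1) = (N + 1) + k)
    (A : 𝒞.X.obj (op (sobj m))) (B : 𝒞.X.obj (op (sobj (n + 1))))
    (hAB : 𝒞.X.map (tgtHom k m hm).op A = 𝒞.X.map (srcHom k (n + 1) (by omega)).op B)
    (h : 𝒞.X.map (tgtHom k m hm).op A
      = 𝒞.X.map (srcHom k n hn).op (𝒞.X.map (SimplexCategory.δ (Fin.last (n + 1))).op B)) :
    𝒞.X.map (SimplexCategory.δ (Fin.last (N + 1))).op (𝒞.comp hm (by omega) hN A B hAB)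
      = 𝒞.comp hm hn (by omega) A
          (𝒞.X.map (SimplexCategory.δ (Fin.last (n + 1))).op B) h := by
  have hlast : (⟨N + 1 - m + k, by omega⟩ : Fin (n + 2)) = Fin.last (n + 1) :=
    Fin.ext (by simp only [Fin.val_last]; omega)
  exact (𝒞.comp_delta_high hm _ hN (N + 1) (by omega) le_rfl A B hAB
    (by rw [hlast]; exact h)).trans
    (𝒞.comp_congr hm hn _ rfl (by rw [hlast]) _ _)

lemma map_δ_zero_comp (hm : k ≤ m) (hn : k ≤ n) (hN : (m + 1) + n = (N + 1) + k)
    (A : 𝒞.X.obj (op (sobj (m + 1)))) (B : 𝒞.X.obj (op (sobj n)))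
    (hAB : 𝒞.X.map (tgtHom k (m + 1) (by omega)).op A = 𝒞.X.map (srcHom k n hn).op B)
    (h : 𝒞.X.map (tgtHom k m hm).op (𝒞.X.map (SimplexCategory.δ 0).op A)
      = 𝒞.X.map (srcHom k n hn).op B) :
    𝒞.X.map (SimplexCategory.δ 0).op (𝒞.comp (by omega) hn hN A B hAB)
      = 𝒞.comp hm hn (by omega) (𝒞.X.map (SimplexCategory.δ 0).op A) B h :=
  𝒞.comp_delta_low _ hn hN 0 (by omega) A B hAB h

lemma map_srcHom_comp (hm : k ≤ m) (hn : k ≤ n) (hN : m + n = N + k) {p r : ℕ}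
    (hkp : k ≤ p) (hpn : p ≤ n) (hr : r + k = m + p)
    (A : 𝒞.X.obj (op (sobj m))) (B : 𝒞.X.obj (op (sobj n)))
    (hAB : 𝒞.X.map (tgtHom k m hm).op A = 𝒞.X.map (srcHom k n hn).op B)
    (h : 𝒞.X.map (tgtHom k m hm).op A
      = 𝒞.X.map (srcHom k p hkp).op (𝒞.X.map (srcHom p n hpn).op B)) :
    𝒞.X.map (srcHom r N (by omega)).op (𝒞.comp hm hn hN A B hAB)
      = 𝒞.comp hm hkp (by omega) A (𝒞.X.map (srcHom p n hpn).op B) h := by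
  induction n, hpn using Nat.le_induction generalizing N with
  | base =>
    obtain rfl : N = r := by omega
    rw [map_srcHom_self]
    exact 𝒞.comp_congr hm hkp _ rfl (map_srcHom_self _ _ _).symm _ _
  | succ n hpn IH =>
    obtain ⟨N, rfl⟩ : ∃ N', N = N' + 1 := ⟨N - 1, by omega⟩
    have hB := hAB.trans (map_srcHom_map_δ_last _ (by omega) B).symm
    rw [← map_srcHom_map_δ_last _ (show r ≤ N by omega),
      𝒞.map_δ_last_comp hm _ hN A B hAB hB,
      IH (by omega) _ _ hB (by rwa [map_srcHom_map_δ_last])]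
    exact 𝒞.comp_congr hm hkp _ rfl (map_srcHom_map_δ_last _ _ _) _ _

lemma map_tgtHom_comp (hm : k ≤ m) (hn : k ≤ n) (hN : m + n = N + k) {q r : ℕ}
    (hkq : k ≤ q) (hqm : q ≤ m) (hr : r + k = q + n)
    (A : 𝒞.X.obj (op (sobj m))) (B : 𝒞.X.obj (op (sobj n)))
    (hAB : 𝒞.X.map (tgtHom k m hm).op A = 𝒞.X.map (srcHom k n hn).op B)
    (h : 𝒞.X.map (tgtHom k q hkq).op (𝒞.X.map (tgtHom q m hqm).op A)
      = 𝒞.X.map (srcHom k n hn).op B) :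
    𝒞.X.map (tgtHom r N (by omega)).op (𝒞.comp hm hn hN A B hAB)
      = 𝒞.comp hkq hn (by omega) (𝒞.X.map (tgtHom q m hqm).op A) B h := by
  induction m, hqm using Nat.le_induction generalizing N with
  | base =>
    obtain rfl : N = r := by omega
    rw [map_tgtHom_self]
    exact 𝒞.comp_congr hkq hn _ (map_tgtHom_self _ _ _).symm rfl _ _
  | succ m hqm IH =>
    obtain ⟨N, rfl⟩ : ∃ N', N = N' + 1 := ⟨N - 1, by omega⟩
    have hA := (map_tgtHom_map_δ_zero _ (by omega) A).trans hAB
    rw [← map_tgtHom_map_δ_zero _ (show r ≤ N by omega),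
      𝒞.map_δ_zero_comp _ hn hN A B hAB hA,
      IH (by omega) _ _ hA (by rwa [map_tgtHom_map_δ_zero])]
    exact 𝒞.comp_congr hkq hn _ (map_tgtHom_map_δ_zero _ _ _) rfl _ _

lemma map_srcHom_comp_eq_left (hm : k ≤ m) (hn : k ≤ n) (hN : m + n = N + k)
    (A : 𝒞.X.obj (op (sobj m))) (B : 𝒞.X.obj (op (sobj n)))
    (hAB : 𝒞.X.map (tgtHom k m hm).op A = 𝒞.X.map (srcHom k n hn).op B) :
    𝒞.X.map (srcHom m N (by omega)).op (𝒞.comp hm hn hN A B hAB) = A := by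
  rw [𝒞.map_srcHom_comp hm hn hN le_rfl hn (by omega) A B hAB (by rwa [map_srcHom_self]),
    𝒞.comp_congr hm le_rfl _ rfl hAB.symm _ (map_srcHom_self _ _ _).symm]
  exact 𝒞.id_right hm A _

lemma map_tgtHom_comp_eq_right (hm : k ≤ m) (hn : k ≤ n) (hN : m + n = N + k)
    (A : 𝒞.X.obj (op (sobj m))) (B : 𝒞.X.obj (op (sobj n)))
    (hAB : 𝒞.X.map (tgtHom k m hm).op A = 𝒞.X.map (srcHom k n hn).op B) :
    𝒞.X.map (tgtHom n N (by omega)).op (𝒞.comp hm hn hN A B hAB) = B := by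
  rw [𝒞.map_tgtHom_comp hm hn hN le_rfl hm (by omega) A B hAB (by rwa [map_tgtHom_self]),
    𝒞.comp_congr le_rfl hn _ hAB rfl _ (map_tgtHom_self _ _ _)]
  exact 𝒞.id_left hn B _

lemma comp_eq_comp_comp_map_srcHom (hm : k ≤ m) (hn : k ≤ n) (hN : m + n = N + k) {p r : ℕ}
    (hkp : k ≤ p) (hpn : p ≤ n) (hr : r + k = m + p)
    (A : 𝒞.X.obj (op (sobj m))) (B : 𝒞.X.obj (op (sobj n)))
    (hAB : 𝒞.X.map (tgtHom k m hm).op A = 𝒞.X.map (srcHom k n hn).op B)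
    (h₁ : 𝒞.X.map (tgtHom k m hm).op A
      = 𝒞.X.map (srcHom k p hkp).op (𝒞.X.map (srcHom p n hpn).op B))
    (h₂ : 𝒞.X.map (tgtHom p r (by omega)).op
      (𝒞.comp hm hkp (show m + p = r + k by omega) A (𝒞.X.map (srcHom p n hpn).op B) h₁)
      = 𝒞.X.map (srcHom p n hpn).op B) :
    𝒞.comp hm hn hN A B hAB
      = 𝒞.comp (show p ≤ r by omega) hpn (show r + n = N + p by omega)
          (𝒞.comp hm hkp (show m + p = r + k by omega) A (𝒞.X.map (srcHom p n hpn).op B) h₁)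
          B h₂ := by
  obtain ⟨i, rfl⟩ : ∃ i, p = k + i := ⟨p - k, by omega⟩
  obtain rfl : r = m + i := by omega
  have hsrc := 𝒞.map_srcHom_comp hm hn hN hkp hpn hr A B hAB h₁
  exact (𝒞.back_forth_left hm hn hN i (by omega) A B hAB (by rwa [hsrc])).symm.trans
    (𝒞.comp_congr _ hpn _ hsrc rfl _ _)

lemma comp_eq_comp_map_tgtHom_comp (hm : k ≤ m) (hn : k ≤ n) (hN : m + n = N + k) {q r : ℕ}
    (hkq : k ≤ q) (hqm : q ≤ m) (hr : r + k = q + n)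
    (A : 𝒞.X.obj (op (sobj m))) (B : 𝒞.X.obj (op (sobj n)))
    (hAB : 𝒞.X.map (tgtHom k m hm).op A = 𝒞.X.map (srcHom k n hn).op B)
    (h₁ : 𝒞.X.map (tgtHom k q hkq).op (𝒞.X.map (tgtHom q m hqm).op A)
      = 𝒞.X.map (srcHom k n hn).op B)
    (h₂ : 𝒞.X.map (tgtHom q m hqm).op A
      = 𝒞.X.map (srcHom q r (by omega)).op
        (𝒞.comp hkq hn (show q + n = r + k by omega)
          (𝒞.X.map (tgtHom q m hqm).op A) B h₁)) :
    𝒞.comp hm hn hN A B hAB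
      = 𝒞.comp hqm (show q ≤ r by omega) (show m + r = N + q by omega) A
          (𝒞.comp hkq hn (show q + n = r + k by omega) (𝒞.X.map (tgtHom q m hqm).op A) B h₁)
          h₂ := by
  obtain ⟨i, rfl⟩ : ∃ i, q = k + i := ⟨q - k, by omega⟩
  obtain rfl : r = n + i := by omega
  have htgt := 𝒞.map_tgtHom_comp hm hn hN hkq hqm hr A B hAB h₁
  exact (𝒞.back_forth_right hm hn hN i (by omega) A B hAB (by rwa [htgt])).symm.trans
    (𝒞.comp_congr hqm _ _ rfl htgt _ _)

end Compository

end Compo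

open Compo in
/-- associativity in a compository: for a `(j,k)`-composable triple
`(A, B, C)`, the pairs `(A, B ∘_k C)` and `(A ∘_j B, C)` are `j`- resp. `k`-composable,
and `A ∘_j (B ∘_k C) = (A ∘_j B) ∘_k C`. -/
theorem compository_assoc (𝒞 : Compository) {l m n j k M M' N : ℕ}
    (hjl : j ≤ l) (hjm : j ≤ m) (hkm : k ≤ m) (hkn : k ≤ n)
    (hM : m + n = M + k) (hM' : l + m = M' + j) (hN : l + M = N + j)
    (A : 𝒞.X.obj (op (sobj l))) (B : 𝒞.X.obj (op (sobj m)))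
    (C : 𝒞.X.obj (op (sobj n)))
    (hAB : 𝒞.X.map (tgtHom j l hjl).op A = 𝒞.X.map (srcHom j m hjm).op B)
    (hBC : 𝒞.X.map (tgtHom k m hkm).op B = 𝒞.X.map (srcHom k n hkn).op C) :
    (𝒞.X.map (tgtHom j l hjl).op A
      = 𝒞.X.map (srcHom j M (by omega)).op (𝒞.comp hkm hkn hM B C hBC)) ∧
    (𝒞.X.map (tgtHom k M' (by omega)).op (𝒞.comp hjl hjm hM' A B hAB)
      = 𝒞.X.map (srcHom k n hkn).op C) ∧
    (∀ (h₁ : 𝒞.X.map (tgtHom j l hjl).op A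
        = 𝒞.X.map (srcHom j M (by omega)).op (𝒞.comp hkm hkn hM B C hBC))
      (h₂ : 𝒞.X.map (tgtHom k M' (by omega)).op (𝒞.comp hjl hjm hM' A B hAB)
        = 𝒞.X.map (srcHom k n hkn).op C),
      𝒞.comp hjl (show j ≤ M by omega) hN A (𝒞.comp hkm hkn hM B C hBC) h₁
      = 𝒞.comp (show k ≤ M' by omega) hkn (show M' + n = N + k by omega)
          (𝒞.comp hjl hjm hM' A B hAB) C h₂) := by
  set D := 𝒞.comp hkm hkn hM B C hBC
  set E := 𝒞.comp hjl hjm hM' A B hAB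
  have hsrcD : 𝒞.X.map (srcHom m M (by omega)).op D = B :=
    𝒞.map_srcHom_comp_eq_left hkm hkn hM B C hBC
  have htgtE : 𝒞.X.map (tgtHom m M' (by omega)).op E = B :=
    𝒞.map_tgtHom_comp_eq_right hjl hjm hM' A B hAB
  refine ⟨?_, ?_, fun h₁ h₂ => ?_⟩
  · rwa [← map_srcHom_map_srcHom _ hjm (by omega), hsrcD]
  · rwa [← map_tgtHom_map_tgtHom _ hkm (by omega), htgtE]
  calc 𝒞.comp hjl _ hN A D h₁
      = 𝒞.comp (k := m) (by omega) (by omega) (by omega) E D (htgtE.trans hsrcD.symm) := by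
        rw [𝒞.comp_eq_comp_comp_map_srcHom (r := M') hjl _ hN hjm (by omega) (by omega) A D h₁
          (by rwa [hsrcD]) (by rw [𝒞.map_tgtHom_comp_eq_right])]
        exact 𝒞.comp_congr _ _ _ (𝒞.comp_congr _ _ _ rfl hsrcD _ _) rfl _ _
    _ = 𝒞.comp _ hkn _ E C h₂ := by
        rw [𝒞.comp_eq_comp_map_tgtHom_comp (r := M) _ hkn _ hkm (by omega) (by omega) E C h₂
          (by rwa [htgtE]) (by rw [𝒞.map_srcHom_comp_eq_left])]
        exact 𝒞.comp_congr _ _ _ rfl (𝒞.comp_congr _ _ _ htgtE.symm rfl _ _) _ _
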